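/- Let Λ be an artin algebra. Suppose (f, g), with f : A → C and g : B → D, is a morphism in the morphism category from an object (a : A → B) to an object (c : C → D), where the inclusion a₂ : Im(a) → B is an injective envelope. Let h : Im(a) → Im(c) be the induced map on images. If the pair (f, h) : (A → Im a) → (C → Im c) is a split monomorphism in the morphism category (i.e. has a left inverse), then (f, g) is a split monomorphism. -/

import Mathlib

/-!
Split the pair `(f, h)` by `(u, w)` and use injectivity of `B` to extend `Im c → Im a ↪ B`
along `Im c ↪ D` to some `v : D → B`; then `a ∘ u = v ∘ c`. The endomorphism `v ∘ g` of `B`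
fixes `Im a`, so its kernel misses the essential submodule `Im a` and it is injective.
Injectivity of `B` again gives a retraction `r` of `v ∘ g`, which also fixes `Im a`, and
`(u, r ∘ v)` is the required retraction of `(f, g)`.
-/

universe u

/-- A linear map factors through an injective `Λ`-module. -/
def FactorsThroughInjective (Λ : Type u) [Ring Λ] {A B : Type u}
    [AddCommGroup A] [Module Λ A] [AddCommGroup B] [Module Λ B]
    (h : A →ₗ[Λ] B) : Prop :=
  ∃ (I : Type u) (_ : AddCommGroup I) (_ : Module Λ I),
    Module.Injective Λ I ∧ ∃ (p : A →ₗ[Λ] I) (q : I →ₗ[Λ] B), h = q ∘ₗ p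

/-- `e : M →ₗ[Λ] I` is an injective envelope: `I` is injective, `e` is injective,
and the image of `e` is an essential submodule of `I`. -/
def IsInjectiveEnvelope (Λ : Type u) [Ring Λ] {M I : Type u}
    [AddCommGroup M] [Module Λ M] [AddCommGroup I] [Module Λ I]
    (e : M →ₗ[Λ] I) : Prop :=
  Module.Injective Λ I ∧ Function.Injective e ∧
    ∀ N : Submodule Λ I, N ≠ ⊥ → N ⊓ LinearMap.range e ≠ ⊥

universe v

open LinearMap

def Submodule.IsEssential {R M : Type*} [Ring R] [AddCommGroup M] [Module R M]
    (S : Submodule R M) : Prop :=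
  ∀ N : Submodule R M, N ≠ ⊥ → N ⊓ S ≠ ⊥

section Essential

variable {Λ : Type u} [Ring Λ] {B : Type v} [AddCommGroup B] [Module Λ B]

theorem Submodule.IsEssential.injective_of_disjoint_ker {M : Type*} [AddCommGroup M]
    [Module Λ M] {S : Submodule Λ B} (hS : S.IsEssential) {φ : B →ₗ[Λ] M}
    (hφ : Disjoint (ker φ) S) : Function.Injective φ := by
  rw [← ker_eq_bot]
  by_contra hne
  exact hS _ hne (disjoint_iff.mp hφ)

theorem Submodule.IsEssential.exists_retraction_of_comp_subtype [Small.{v} Λ]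
    [Module.Injective Λ B] {S : Submodule Λ B} (hS : S.IsEssential) {e : B →ₗ[Λ] B}
    (he : e ∘ₗ S.subtype = S.subtype) :
    ∃ r : B →ₗ[Λ] B, r ∘ₗ e = LinearMap.id ∧ r ∘ₗ S.subtype = S.subtype := by
  have hinj : Function.Injective e := hS.injective_of_disjoint_ker <| by
    refine Submodule.disjoint_def.mpr fun x hxe hxS => ?_
    simpa [mem_ker.mp hxe] using (congr($he ⟨x, hxS⟩)).symm
  obtain ⟨r, hr⟩ := Module.Injective.extension_property Λ B B B e hinj LinearMap.id
  refine ⟨r, hr, ?_⟩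
  calc r ∘ₗ S.subtype = r ∘ₗ e ∘ₗ S.subtype := by rw [he]
    _ = S.subtype := by rw [← comp_assoc, hr, id_comp]

end Essential

theorem stmt15_general
    (Λ : Type u) [Ring Λ]
    (A B C D : Type u)
    [AddCommGroup A] [Module Λ A]
    [AddCommGroup B] [Module Λ B]
    [AddCommGroup C] [Module Λ C]
    [AddCommGroup D] [Module Λ D]
    (a : A →ₗ[Λ] B) (c : C →ₗ[Λ] D)
    (f : A →ₗ[Λ] C) (g : B →ₗ[Λ] D)
    -- the inclusion Im a → B is an injective envelope:
    (hBinj : Module.Injective Λ B)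
    (hess : ∀ N : Submodule Λ B, N ≠ ⊥ → N ⊓ LinearMap.range a ≠ ⊥)
    -- h : Im a → Im c is the induced map on images:
    (h : ↥(LinearMap.range a) →ₗ[Λ] ↥(LinearMap.range c))
    (hh₂ : (LinearMap.range c).subtype ∘ₗ h = g ∘ₗ (LinearMap.range a).subtype)
    -- (f, h) is a split monomorphism in the morphism category:
    (hsplit : ∃ (u : C →ₗ[Λ] A) (w : ↥(LinearMap.range c) →ₗ[Λ] ↥(LinearMap.range a)),
      a.rangeRestrict ∘ₗ u = w ∘ₗ c.rangeRestrict ∧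
      u ∘ₗ f = LinearMap.id ∧ w ∘ₗ h = LinearMap.id) :
    -- then (f, g) is a split monomorphism:
    ∃ (u' : C →ₗ[Λ] A) (v' : D →ₗ[Λ] B),
      a ∘ₗ u' = v' ∘ₗ c ∧ u' ∘ₗ f = LinearMap.id ∧ v' ∘ₗ g = LinearMap.id := by
  obtain ⟨u, w, hw, huf, hwh⟩ := hsplit
  obtain ⟨v, hv⟩ := Module.Injective.extension_property Λ B _ _ (range c).subtype
    (Submodule.injective_subtype _) ((range a).subtype ∘ₗ w)
  have hvc : v ∘ₗ c = a ∘ₗ u :=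
    calc v ∘ₗ c = v ∘ₗ (range c).subtype ∘ₗ c.rangeRestrict := rfl
      _ = (range a).subtype ∘ₗ w ∘ₗ c.rangeRestrict := by rw [← comp_assoc, hv, comp_assoc]
      _ = (range a).subtype ∘ₗ a.rangeRestrict ∘ₗ u := by rw [hw]
      _ = a ∘ₗ u := rfl
  have hfix : (v ∘ₗ g) ∘ₗ (range a).subtype = (range a).subtype := by
    rw [comp_assoc, ← hh₂, ← comp_assoc, hv, comp_assoc, hwh, comp_id]
  obtain ⟨r, hr, hra⟩ := Submodule.IsEssential.exists_retraction_of_comp_subtype hess hfix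
  refine ⟨u, r ∘ₗ v, ?_, huf, by rw [comp_assoc, hr]⟩
  calc a ∘ₗ u = (range a).subtype ∘ₗ a.rangeRestrict ∘ₗ u := rfl
    _ = (r ∘ₗ (range a).subtype) ∘ₗ a.rangeRestrict ∘ₗ u := by rw [hra]
    _ = r ∘ₗ v ∘ₗ c := by rw [comp_assoc, hvc]; rfl

/-- let `(f, g) : (a : A → B) → (c : C → D)` be a morphism in the morphism
category such that the inclusion `Im a → B` is an injective envelope (`B` injective with
essential image of `a`), and let `h : Im a → Im c` be the induced map on images. If
`(f, h) : (A → Im a) → (C → Im c)` is a split monomorphism, then so is `(f, g)`. -/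
theorem stmt15
    (k : Type u) [CommRing k] [IsArtinianRing k]
    (Λ : Type u) [Ring Λ] [Algebra k Λ] [Module.Finite k Λ]
    (A B C D : Type u)
    [AddCommGroup A] [Module Λ A] [Module.Finite Λ A]
    [AddCommGroup B] [Module Λ B] [Module.Finite Λ B]
    [AddCommGroup C] [Module Λ C] [Module.Finite Λ C]
    [AddCommGroup D] [Module Λ D] [Module.Finite Λ D]
    (a : A →ₗ[Λ] B) (c : C →ₗ[Λ] D)
    (f : A →ₗ[Λ] C) (g : B →ₗ[Λ] D)
    (hsq : c ∘ₗ f = g ∘ₗ a)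
    -- the inclusion Im a → B is an injective envelope:
    (hBinj : Module.Injective Λ B)
    (hess : ∀ N : Submodule Λ B, N ≠ ⊥ → N ⊓ LinearMap.range a ≠ ⊥)
    -- h : Im a → Im c is the induced map on images:
    (h : ↥(LinearMap.range a) →ₗ[Λ] ↥(LinearMap.range c))
    (hh₁ : h ∘ₗ a.rangeRestrict = c.rangeRestrict ∘ₗ f)
    (hh₂ : (LinearMap.range c).subtype ∘ₗ h = g ∘ₗ (LinearMap.range a).subtype)
    -- (f, h) is a split monomorphism in the morphism category:
    (hsplit : ∃ (u : C →ₗ[Λ] A) (w : ↥(LinearMap.range c) →ₗ[Λ] ↥(LinearMap.range a)),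
      a.rangeRestrict ∘ₗ u = w ∘ₗ c.rangeRestrict ∧
      u ∘ₗ f = LinearMap.id ∧ w ∘ₗ h = LinearMap.id) :
    -- then (f, g) is a split monomorphism:
    ∃ (u' : C →ₗ[Λ] A) (v' : D →ₗ[Λ] B),
      a ∘ₗ u' = v' ∘ₗ c ∧ u' ∘ₗ f = LinearMap.id ∧ v' ∘ₗ g = LinearMap.id :=
  stmt15_general Λ A B C D a c f g hBinj hess h hh₂ hsplit
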